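/- Let ∂ be a generator and set H_x(μ) = 1{∂(μ + δ_x) ≠ ∂μ} and \bar H = 1 − H. Then for all x, y ∈ X and μ ∈ N: \bar H_y(μ + δ_x)·\bar H_x(μ + δ_y) = \bar H_x(μ)·\bar H_y(μ). -/

import Mathlib

/-- The Dirac counting measure at a point, in the model of counting measures
on `X` as functions `X → ℕ` (pointwise order and addition). -/
noncomputable def delta {X : Type*} (x : X) : X → ℕ := Set.indicator {x} 1

/-- A generator: a map on counting measures satisfying (H1) thinning, (H2) additivity,
(H3) idempotency and (H4) consistency. -/
def IsGenerator {X : Type*} (D : (X → ℕ) → (X → ℕ)) : Prop :=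
  (∀ μ, D μ ≤ μ) ∧
  (∀ μ x, D μ x ≠ 0 → D (μ + delta x) = D μ + delta x) ∧
  (∀ μ μ' : X → ℕ, μ' ≤ μ - D μ → D (D μ + μ') = D μ) ∧
  (∀ μ μ' ψ : X → ℕ, μ' ≤ μ → D μ = D μ' → D (μ + ψ) = D (μ' + ψ))

/-- The hull operator associated with a generator. -/
def hull {X : Type*} (D : (X → ℕ) → (X → ℕ)) (μ : X → ℕ) : Set X :=
  {x | D (μ + delta x) = D μ}

open scoped Classical

/-- The indicator `H_x(μ) = 1{∂(μ + δ_x) ≠ ∂μ}`, as a real number. -/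
noncomputable def Hf {X : Type*} (D : (X → ℕ) → (X → ℕ)) (x : X) (μ : X → ℕ) : ℝ :=
  if D (μ + delta x) = D μ then 0 else 1

/-! Both sides are indicators, of the conjunctions
`∂(μ + δ_x + δ_y) = ∂(μ + δ_x) ∧ ∂(μ + δ_y + δ_x) = ∂(μ + δ_y)` and
`∂(μ + δ_x) = ∂μ ∧ ∂(μ + δ_y) = ∂μ`, so it suffices that these are equivalent.
From right to left this is (H4). From left to right, (H2) forces `ν := ∂(μ + δ_x)` to vanish
at `x` (adding `δ_x` to `μ + δ_y` does not change `ν`), so `ν ≤ μ ≤ μ + δ_x`, and (H3)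
shows that `∂` is constant on such a sandwich: `∂μ = ν`. -/

theorem delta_self {X : Type*} (x : X) : delta x x = 1 := by
  simp [delta]

theorem delta_of_ne {X : Type*} {x z : X} (h : z ≠ x) : delta x z = 0 := by
  simp [delta, h]

theorem le_of_le_add_delta {X : Type*} {ν μ : X → ℕ} {x : X} (h : ν ≤ μ + delta x)
    (hx : ν x = 0) : ν ≤ μ := by
  intro z
  by_cases hz : z = x
  · subst hz
    simp [hx]
  · simpa [delta_of_ne hz] using h z

namespace IsGenerator

variable {X : Type*} {D : (X → ℕ) → (X → ℕ)}

theorem apply_le (hD : IsGenerator D) (μ : X → ℕ) : D μ ≤ μ := hD.1 μ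

theorem apply_eq_zero_of_add_delta (hD : IsGenerator D) {μ : X → ℕ} {x : X}
    (h : D (μ + delta x) = D μ) : D μ x = 0 := by
  by_contra hx
  have hadd := congrFun (hD.2.1 μ x hx) x
  rw [h, Pi.add_apply, delta_self] at hadd
  omega

theorem apply_eq_of_apply_le_of_le (hD : IsGenerator D) {μ ν : X → ℕ} (hν : D ν ≤ μ)
    (hμ : μ ≤ ν) : D μ = D ν := by
  have h := hD.2.2.1 ν (μ - D ν) (tsub_le_tsub_right hμ _)
  rwa [add_tsub_cancel_of_le hν] at h

theorem add_delta_add_eq (hD : IsGenerator D) {μ : X → ℕ} {x : X}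
    (h : D (μ + delta x) = D μ) (ψ : X → ℕ) : D (μ + delta x + ψ) = D (μ + ψ) :=
  hD.2.2.2 _ _ ψ le_self_add h

theorem two_point (hD : IsGenerator D) (x y : X) (μ : X → ℕ) :
    (D (μ + delta x + delta y) = D (μ + delta x) ∧ D (μ + delta y + delta x) = D (μ + delta y)) ↔
      (D (μ + delta x) = D μ ∧ D (μ + delta y) = D μ) := by
  constructor
  · rintro ⟨hxy, hyx⟩
    have hcomm : D (μ + delta x) = D (μ + delta y) := by
      rw [← hxy, ← hyx, add_right_comm]
    have hx : D (μ + delta x) x = 0 := hcomm ▸ hD.apply_eq_zero_of_add_delta hyx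
    have hle : D (μ + delta x) ≤ μ := le_of_le_add_delta (hD.apply_le _) hx
    have hμ : D μ = D (μ + delta x) := hD.apply_eq_of_apply_le_of_le hle le_self_add
    exact ⟨hμ.symm, hcomm ▸ hμ.symm⟩
  · rintro ⟨hx, hy⟩
    refine ⟨?_, ?_⟩
    · rw [hD.add_delta_add_eq hx, hy, hx]
    · rw [hD.add_delta_add_eq hy, hx, hy]

end IsGenerator

theorem one_sub_Hf {X : Type*} (D : (X → ℕ) → (X → ℕ)) (x : X) (μ : X → ℕ) :
    1 - Hf D x μ = if D (μ + delta x) = D μ then 1 else 0 := by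
  unfold Hf
  split_ifs <;> norm_num

/-- `H̄_y(μ + δ_x) · H̄_x(μ + δ_y) = H̄_x(μ) · H̄_y(μ)` where `H̄ = 1 − H`. -/
theorem barH_product {X : Type*} (D : (X → ℕ) → (X → ℕ))
    (hD : IsGenerator D) (x y : X) (μ : X → ℕ) :
    (1 - Hf D y (μ + delta x)) * (1 - Hf D x (μ + delta y)) =
      (1 - Hf D x μ) * (1 - Hf D y μ) := by
  simp only [one_sub_Hf, ite_zero_mul_ite_zero]
  exact if_congr (hD.two_point x y μ) rfl rfl
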